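/- arXiv:1410.2126 — 2 statements merged into one kernel-verified Lean document; each statement's English description precedes it below -/
import Mathlib

section
/- Let I be a fractional ideal of O, let ν, λ ∈ ℤ^p with t^ν·O~ ⊆ I ⊆ t^λ·O~, and set 𝒱 = {v ∈ ℤ^p : Δ(γ − v − 1, val(I)) = ∅} and n₀ = Σ_{i=1}^p (ν_i − λ_i). Let (α^{(j)})_{0 ≤ j ≤ n₀} be any sequence in ℤ^p with α^{(0)} = γ − ν, α^{(n₀)} = γ − λ, and for each j ∈ {0,…,n₀−1} some i(j) ∈ {1,…,p} with α^{(j+1)} = α^{(j)} + e_{i(j)}. Setting ℓ' = Card{ j ∈ {0,…,n₀−1} : Λ_{i(j)}(α^{(j)}, 𝒱) ≠ ∅ }, one has dim_ℂ(I / t^ν·O~) ≤ Σ_{i=1}^p (ν_i − λ_i) − ℓ'. -/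
/-!
Step `j` of the path raises `α_{i(j)}` by one, so the coefficients of `g_{i(j)}` in degree
`γ_{i(j)} − α^{(j+1)}_{i(j)}`, `j < n₀`, are exactly those separating `t^λ·O~` from `t^ν·O~`.
If `g ∈ I` and the coefficients of all steps after `j` vanish, then at a step with
`Λ_{i(j)}(α^{(j)}, 𝒱) ≠ ∅` the coefficient vanishes as well: otherwise adding to `g` a monomial
vector of `t^ν·O~ ⊆ I` gives a non-zerodivisor whose value lies in `Δ_{i(j)}(γ − v − 1, val(I))`
for some `v ∈ 𝒱`. By downward induction along the path, the coefficients of the remaining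
`n₀ − ℓ'` steps therefore embed `I / t^ν·O~` into `ℂ^{n₀ − ℓ'}`.
-/

open scoped Classical

set_option synthInstance.maxHeartbeats 1000000
set_option maxHeartbeats 1000000

noncomputable section

/-- `K`, the total ring of fractions: the product of `p` copies of the field of
formal Laurent series over `ℂ`. -/
abbrev KK (p : ℕ) : Type := Fin p → LaurentSeries ℂ

lemma algebraMap_component {p : ℕ} (c : ℂ) (i : Fin p) :
    algebraMap ℂ (KK p) c i = HahnSeries.single (0:ℤ) c := by
  rw [Pi.algebraMap_apply, HahnSeries.algebraMap_apply', PowerSeries.algebraMap_apply,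
      Algebra.algebraMap_self_apply, HahnSeries.ofPowerSeries_C, HahnSeries.C_apply]

lemma smul_eq_algebraMap_mul {p : ℕ} (c : ℂ) (x : KK p) :
    c • x = algebraMap ℂ (KK p) c * x := by
  funext i
  rw [Pi.smul_apply, Pi.mul_apply, algebraMap_component,
      HahnSeries.single_zero_mul_eq_smul]

/-- The `t`-adic order of a Laurent series, with `⊤` for the zero series. -/
def valC (g : LaurentSeries ℂ) : WithTop ℤ :=
  if g = 0 then ⊤ else (g.order : WithTop ℤ)

/-- The value vector `val(g) = (val_1 g, …, val_p g)`. -/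
def valVec {p : ℕ} (g : KK p) : Fin p → WithTop ℤ := fun i => valC (g i)

/-- The set `t^α·O~` of tuples of Laurent series whose `i`-th component has all
coefficients in degrees below `α i` equal to zero (equivalently, whose `i`-th
component has `t`-adic order at least `α i`), as a `ℂ`-submodule of `K`.
For `α = 0` this is `O~` itself. -/
def stdMod (p : ℕ) (α : Fin p → ℤ) : Submodule ℂ (KK p) where
  carrier := {g | ∀ i, ∀ j : ℤ, j < α i → (g i).coeff j = 0}
  add_mem' := by
    intro a b ha hb i j hj
    simp [HahnSeries.coeff_add, ha i j hj, hb i j hj]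
  zero_mem' := by
    intro i j hj
    simp
  smul_mem' := by
    intro c a ha i j hj
    simp [HahnSeries.coeff_smul, ha i j hj]

/-- The dual `S^∨ = {h ∈ K : h·S ⊆ O}` of a subset `S ⊆ K`, as a
`ℂ`-submodule of `K`. -/
def dualMod {p : ℕ} (O : Subalgebra ℂ (KK p)) (S : Set (KK p)) :
    Submodule ℂ (KK p) where
  carrier := {h | ∀ g ∈ S, h * g ∈ O}
  add_mem' := by
    intro a b ha hb g hg
    simpa [add_mul] using add_mem (ha g hg) (hb g hg)
  zero_mem' := by
    intro g hg
    simpa using O.zero_mem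
  smul_mem' := by
    intro c a ha g hg
    rw [smul_eq_algebraMap_mul, mul_assoc]
    exact O.mul_mem (O.algebraMap_mem c) (ha g hg)

/-- `val(S)`: values of the non-zerodivisors of `K` (elements all of whose
components are nonzero) belonging to `S`. -/
def vals {p : ℕ} (S : Set (KK p)) : Set (Fin p → ℤ) :=
  {v | ∃ g ∈ S, ∀ i, valC (g i) = (v i : WithTop ℤ)}

/-- `valbar(S)`: values of all elements of `S`. -/
def valsBar {p : ℕ} (S : Set (KK p)) : Set (Fin p → WithTop ℤ) :=
  {v | ∃ g ∈ S, ∀ i, valC (g i) = v i}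

/-- `I` is a fractional ideal of `O`: an `O`-stable `ℂ`-submodule of `K` which
is finitely generated over `O` and contains a non-zerodivisor of `K`. -/
def IsFracIdeal {p : ℕ} (O : Subalgebra ℂ (KK p)) (I : Submodule ℂ (KK p)) : Prop :=
  (∀ a ∈ O, ∀ x ∈ I, a * x ∈ I) ∧
  (∃ s : Finset (KK p), (↑s : Set (KK p)) ⊆ (I : Set (KK p)) ∧
    ∀ x ∈ I, ∃ a : KK p → KK p, (∀ g ∈ s, a g ∈ O) ∧ x = ∑ g ∈ s, a g * g) ∧
  (∃ g ∈ I, ∀ i, g i ≠ 0)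

/-- `Δ_i(v, M)`. -/
def DeltaI {p : ℕ} (i : Fin p) (v : Fin p → ℤ) (M : Set (Fin p → ℤ)) :
    Set (Fin p → ℤ) :=
  {α ∈ M | α i = v i ∧ ∀ j, j ≠ i → v j < α j}

/-- `Δ(v, M) = ⋃ i, Δ_i(v, M)`. -/
def DeltaSet {p : ℕ} (v : Fin p → ℤ) (M : Set (Fin p → ℤ)) : Set (Fin p → ℤ) :=
  ⋃ i : Fin p, DeltaI i v M

/-- `Λ_i(v, M)`. -/
def LamSet {p : ℕ} (i : Fin p) (v : Fin p → ℤ) (M : Set (Fin p → ℤ)) :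
    Set (Fin p → ℤ) :=
  {α ∈ M | α i = v i ∧ v ≤ α}

/-- `dim_ℂ (B / A)`: the dimension of the image of `B` in `K ⧸ A`
(which is canonically `B/(A ∩ B)`). -/
def qdim {p : ℕ} (A B : Submodule ℂ (KK p)) : ℕ :=
  Module.finrank ℂ ↥(B.map A.mkQ)

/-- `c_I(v) = dim_ℂ (I_v / I_{v+1})`, where `I_v = {g ∈ I : val g ≥ v}`. -/
def cI {p : ℕ} (I : Submodule ℂ (KK p)) (v : Fin p → ℤ) : ℕ :=
  qdim (I ⊓ stdMod p (v + 1)) (I ⊓ stdMod p v)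

/-- `α_I(v) = Σ_{J ⊆ {1,…,p}} (−1)^{p−|J|} c_I(v − e_J)`. -/
def alphaI {p : ℕ} (I : Submodule ℂ (KK p)) (v : Fin p → ℤ) : ℤ :=
  ∑ J : Finset (Fin p),
    (-1 : ℤ) ^ (p - J.card) * cI I (fun j => v j - if j ∈ J then 1 else 0)

/-- `O` itself, as a `ℂ`-submodule of `K`. -/
def algSubmodule {p : ℕ} (O : Subalgebra ℂ (KK p)) : Submodule ℂ (KK p) where
  carrier := O
  add_mem' := fun ha hb => O.add_mem ha hb
  zero_mem' := O.zero_mem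
  smul_mem' := fun c x hx => by
    rw [smul_eq_algebraMap_mul]
    exact O.mul_mem (O.algebraMap_mem c) hx


theorem Submodule.finrank_map_mkQ_le_of_ker_inf_le {k V W : Type*} [Field k] [AddCommGroup V]
    [Module k V] [AddCommGroup W] [Module k W] [FiniteDimensional k W]
    {A B : Submodule k V} (f : V →ₗ[k] W) (h : LinearMap.ker f ⊓ B ≤ A) :
    Module.finrank k (B.map A.mkQ) ≤ Module.finrank k W := by
  set f' := f ∘ₗ B.subtype
  have hker : LinearMap.ker f' ≤ LinearMap.ker (A.mkQ ∘ₗ B.subtype) := fun x hx => by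
    simpa [Submodule.Quotient.mk_eq_zero] using h ⟨hx, x.2⟩
  have hrange : B.map A.mkQ = LinearMap.range
      ((LinearMap.ker f').liftQ _ hker ∘ₗ f'.quotKerEquivRange.symm.toLinearMap) := by
    rw [LinearMap.range_comp, LinearEquiv.range, Submodule.map_top, Submodule.range_liftQ,
      LinearMap.range_comp, Submodule.range_subtype]
  rw [hrange]
  exact (LinearMap.finrank_range_le _).trans (Submodule.finrank_le _)

theorem HahnSeries.orderTop_add_single {Γ R : Type*} [LinearOrder Γ] [AddMonoid R]
    {x : HahnSeries Γ R} {a : Γ} {r : R} (hr : r ≠ 0) (ha : x.orderTop ≠ a) :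
    (x + single a r).orderTop = min x.orderTop a := by
  have hs : (single a r).orderTop = a := orderTop_single hr
  rcases ha.lt_or_gt with h | h
  · rw [orderTop_add_eq_left (hs ▸ h), min_eq_left h.le]
  · rw [orderTop_add_eq_right (hs ▸ h), hs, min_eq_right h.le]

lemma valC_eq_orderTop (g : LaurentSeries ℂ) : valC g = g.orderTop := by
  unfold valC
  split_ifs with h
  · simp [h]
  · exact HahnSeries.order_eq_orderTop_of_ne_zero h

section

variable {p : ℕ}

lemma mem_stdMod_iff {μ : Fin p → ℤ} {g : KK p} :
    g ∈ stdMod p μ ↔ ∀ k, (μ k : WithTop ℤ) ≤ (g k).orderTop := by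
  simp only [HahnSeries.le_orderTop_iff_forall, WithTop.coe_lt_coe]
  rfl

lemma mem_stdMod_add_single {μ : Fin p → ℤ} {g : KK p} {i : Fin p} (hg : g ∈ stdMod p μ)
    (hi : (g i).coeff (μ i) = 0) : g ∈ stdMod p (μ + Pi.single i 1) := by
  intro k m hm
  rcases eq_or_ne k i with rfl | hk
  · rcases (Int.lt_add_one_iff.1 (by simpa using hm)).lt_or_eq with hm | rfl
    · exact hg k m hm
    · exact hi
  · exact hg k m (by simpa [Pi.single_eq_of_ne hk] using hm)

def emptyDeltaSet (c : Fin p → ℤ) (M : Set (Fin p → ℤ)) : Set (Fin p → ℤ) :=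
  {v | DeltaSet (fun k => c k - v k - 1) M = ∅}

variable {I : Submodule ℂ (KK p)} {ν : Fin p → ℤ}

/-- The witness is `g` plus a monomial vector of `t^ν·O~ ⊆ I` placed above `b` and above every
leading term of `g`. -/
lemma exists_mem_vals_between (hν : stdMod p ν ≤ I) {g : KK p} (hg : g ∈ I)
    (b : Fin p → ℤ) : ∃ u ∈ vals (I : Set (KK p)),
      ∀ k, min (g k).orderTop (b k) ≤ u k ∧ (u k : WithTop ℤ) ≤ (g k).orderTop := by
  set N : Fin p → ℤ := fun k => max (ν k) (max (b k) ((g k).order + 1))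
  set δ : KK p := fun k => HahnSeries.single (N k) 1
  have hδ : δ ∈ stdMod p ν := mem_stdMod_iff.2 fun k => by simp [δ, N]
  have hgN : ∀ k, (g k).orderTop ≠ N k := fun k => by
    by_cases hk : g k = 0
    · simp [hk]
    · rw [← HahnSeries.order_eq_orderTop_of_ne_zero hk, Ne, WithTop.coe_inj]
      exact ((lt_add_one _).trans_le ((le_max_right _ _).trans (le_max_right _ _))).ne
  have hord : ∀ k, ((g + δ) k).orderTop = min (g k).orderTop (N k) := fun k =>
    HahnSeries.orderTop_add_single one_ne_zero (hgN k)
  have hfin : ∀ k, ((g + δ) k).orderTop ≠ ⊤ := fun k => by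
    rw [hord]
    exact ne_top_of_le_ne_top WithTop.coe_ne_top (min_le_right _ _)
  refine ⟨fun k => ((g + δ) k).orderTop.untop (hfin k),
    ⟨g + δ, I.add_mem hg (hν hδ), fun k => by simp [valC_eq_orderTop]⟩, fun k => ?_⟩
  simp only [WithTop.coe_untop, hord]
  exact ⟨min_le_min_left _ (by simp [N]), min_le_left _ _⟩

theorem mem_stdMod_sub_of_lamSet_nonempty (hν : stdMod p ν ≤ I) {c β : Fin p → ℤ} {i : Fin p}
    (hΛ : (LamSet i β (emptyDeltaSet c (vals (I : Set (KK p))))).Nonempty) {g : KK p}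
    (hgI : g ∈ I) (hg : g ∈ stdMod p (c - (β + Pi.single i 1))) : g ∈ stdMod p (c - β) := by
  obtain ⟨v, hΔ, hvi, hβv⟩ := hΛ
  set w : Fin p → ℤ := fun k => c k - v k - 1
  have hwi : (c - (β + Pi.single i 1) : Fin p → ℤ) i = w i := by simp [w, hvi]; ring
  suffices hcoeff : (g i).coeff (w i) = 0 by
    have := mem_stdMod_add_single hg (hwi ▸ hcoeff)
    rwa [sub_add_eq_sub_sub, sub_add_cancel] at this
  -- Otherwise `g_i` has order exactly `w_i`, and perturbing `g` yields a value in `Δ_i(w, val I)`.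
  by_contra hne
  have hgi : (g i).orderTop = w i :=
    le_antisymm (HahnSeries.orderTop_le_of_coeff_ne_zero hne) (hwi ▸ mem_stdMod_iff.1 hg i)
  have hgk : ∀ k ≠ i, (w k : WithTop ℤ) < (g k).orderTop := fun k hk => by
    refine lt_of_lt_of_le ?_ (mem_stdMod_iff.1 hg k)
    have : β k ≤ v k := hβv k
    simp only [Pi.sub_apply, Pi.add_apply, Pi.single_eq_of_ne hk, WithTop.coe_lt_coe, w]
    omega
  obtain ⟨u, hu, hub⟩ := exists_mem_vals_between hν hgI (w + 1)
  have hui : u i = w i := by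
    have := hub i
    rw [hgi] at this
    exact WithTop.coe_inj.1 <| this.2.antisymm <|
      (le_min le_rfl (WithTop.coe_le_coe.2 (by simp))).trans this.1
  have huk : ∀ k ≠ i, w k < u k := fun k hk =>
    WithTop.coe_lt_coe.1 <| (lt_min (hgk k hk) (WithTop.coe_lt_coe.2 (by simp))).trans_le (hub k).1
  have hΔ : DeltaSet w (vals (I : Set (KK p))) = ∅ := hΔ
  have hΔu : u ∈ DeltaSet w (vals (I : Set (KK p))) := Set.mem_iUnion.2 ⟨i, hu, hui, huk⟩
  rw [hΔ] at hΔu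
  exact hΔu

variable {lam c : Fin p → ℤ} {n : ℕ} {α : ℕ → Fin p → ℤ} {ii : ℕ → Fin p}

theorem mem_stdMod_of_path (hν : stdMod p ν ≤ I) (hlam : I ≤ stdMod p lam) (hαn : α n = c - lam)
    (hstep : ∀ j < n, α (j + 1) = α j + Pi.single (ii j) 1) {g : KK p} (hgI : g ∈ I)
    (hbad : ∀ j < n, ¬ (LamSet (ii j) (α j) (emptyDeltaSet c (vals (I : Set (KK p))))).Nonempty →
      (g (ii j)).coeff ((c - α (j + 1)) (ii j)) = 0)
    {a : ℕ} (ha : a ≤ n) : g ∈ stdMod p (c - α a) := by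
  induction ha using Nat.decreasingInduction with
  | self => simpa [hαn] using hlam hgI
  | of_succ j hj ih =>
    rw [hstep j hj] at ih
    by_cases hΛ : (LamSet (ii j) (α j) (emptyDeltaSet c (vals (I : Set (KK p))))).Nonempty
    · exact mem_stdMod_sub_of_lamSet_nonempty hν hΛ hgI ih
    · have := mem_stdMod_add_single (i := ii j) ih (by simpa [hstep j hj] using hbad j hj hΛ)
      rwa [sub_add_eq_sub_sub, sub_add_cancel] at this

theorem qdim_add_card_filter_nonempty_le (hν : stdMod p ν ≤ I) (hlam : I ≤ stdMod p lam)
    (hα0 : α 0 = c - ν) (hαn : α n = c - lam)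
    (hstep : ∀ j < n, α (j + 1) = α j + Pi.single (ii j) 1) :
    qdim (stdMod p ν) I + ((Finset.range n).filter fun j =>
      (LamSet (ii j) (α j) (emptyDeltaSet c (vals (I : Set (KK p))))).Nonempty).card ≤ n := by
  have hcard := Finset.card_filter_add_card_filter_not (s := Finset.range n) fun j =>
    (LamSet (ii j) (α j) (emptyDeltaSet c (vals (I : Set (KK p))))).Nonempty
  rw [Finset.card_range] at hcard
  set bad := (Finset.range n).filter fun j =>
    ¬ (LamSet (ii j) (α j) (emptyDeltaSet c (vals (I : Set (KK p))))).Nonempty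
  let stepCoeff : KK p →ₗ[ℂ] (bad → ℂ) := LinearMap.pi fun j =>
    (HahnSeries.coeff.linearMap ((c - α (j + 1)) (ii j))).comp (LinearMap.proj (ii j))
  have hker : LinearMap.ker stepCoeff ⊓ I ≤ stdMod p ν := fun g ⟨h0, hgI⟩ => by
    simpa [hα0] using mem_stdMod_of_path hν hlam hαn hstep hgI
      (fun j hj hΛ => by
        simpa [stepCoeff] using congrFun h0 ⟨j, Finset.mem_filter.2 ⟨Finset.mem_range.2 hj, hΛ⟩⟩)
      (Nat.zero_le n)
  have hdim : qdim (stdMod p ν) I ≤ bad.card := by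
    simpa [qdim] using Submodule.finrank_map_mkQ_le_of_ker_inf_le stepCoeff hker
  omega

end

theorem dim_le_sum_sub_ellprime_general {p : ℕ}
    (γ : Fin p → ℕ)
    (I : Submodule ℂ (KK p))
    (ν lam : Fin p → ℤ)
    (hν : (stdMod p ν : Set (KK p)) ⊆ (I : Set (KK p)))
    (hlam : (I : Set (KK p)) ⊆ (stdMod p lam : Set (KK p)))
    (n0 : ℕ) (hn0 : (n0 : ℤ) = ∑ i, (ν i - lam i))
    (α : ℕ → Fin p → ℤ) (ii : ℕ → Fin p)
    (hα0 : α 0 = fun i => (γ i : ℤ) - ν i)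
    (hαlast : α n0 = fun i => (γ i : ℤ) - lam i)
    (hstep : ∀ j < n0, α (j + 1) = α j + Pi.single (ii j) 1) :
    (qdim (stdMod p ν) I : ℤ) ≤
      (∑ i, (ν i - lam i)) -
        (((Finset.range n0).filter
          (fun j => (LamSet (ii j) (α j)
            {v : Fin p → ℤ |
              DeltaSet (fun k => (γ k : ℤ) - v k - 1)
                (vals (I : Set (KK p))) = ∅}).Nonempty)).card : ℤ) := by
  rw [← hn0, le_sub_iff_add_le]
  exact_mod_cast qdim_add_card_filter_nonempty_le (c := fun k => (γ k : ℤ)) hν hlam hα0 hαlast hstep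

/-- Key inequality: `dim_ℂ (I / t^ν·O~) ≤ Σ (ν_i − λ_i) − ℓ'`. -/
theorem dim_le_sum_sub_ellprime {p : ℕ} (hp : 1 ≤ p) (O : Subalgebra ℂ (KK p))
    (hO : (O : Set (KK p)) ⊆ (stdMod p 0 : Set (KK p)))
    (γ : Fin p → ℕ)
    (hγ : dualMod O (stdMod p 0 : Set (KK p)) = stdMod p (fun i => (γ i : ℤ)))
    (I : Submodule ℂ (KK p)) (hI : IsFracIdeal O I)
    (ν lam : Fin p → ℤ)
    (hν : (stdMod p ν : Set (KK p)) ⊆ (I : Set (KK p)))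
    (hlam : (I : Set (KK p)) ⊆ (stdMod p lam : Set (KK p)))
    (n0 : ℕ) (hn0 : (n0 : ℤ) = ∑ i, (ν i - lam i))
    (α : ℕ → Fin p → ℤ) (ii : ℕ → Fin p)
    (hα0 : α 0 = fun i => (γ i : ℤ) - ν i)
    (hαlast : α n0 = fun i => (γ i : ℤ) - lam i)
    (hstep : ∀ j < n0, α (j + 1) = α j + Pi.single (ii j) 1) :
    (qdim (stdMod p ν) I : ℤ) ≤
      (∑ i, (ν i - lam i)) -
        (((Finset.range n0).filter
          (fun j => (LamSet (ii j) (α j)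
            {v : Fin p → ℤ |
              DeltaSet (fun k => (γ k : ℤ) - v k - 1)
                (vals (I : Set (KK p))) = ∅}).Nonempty)).card : ℤ) :=
  dim_le_sum_sub_ellprime_general γ I ν lam hν hlam n0 hn0 α ii hα0 hαlast hstep
end
end

section
/- (Λ-duality.) For every fractional ideal I of O, every w ∈ ℤ^p and every i ∈ {1,…,p}: Λ_i(w, val(I^∨)) ≠ ∅ if and only if Λ_i(γ − w − e_i, val(I)) = ∅. -/
open scoped Classical

set_option synthInstance.maxHeartbeats 1000000
set_option maxHeartbeats 1000000

noncomputable section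

/-!
Both sides are read off from the one-step filtrations `M ∩ t^w O~ ⊇ M ∩ t^(w + e_i) O~`, whose
quotients are at most one-dimensional. For a fractional ideal `M`, which contains some `t^c O~`,
`Λ_i(w, val M) ≠ ∅` says exactly that this step is proper (components that vanish can be filled
in from `t^c O~`). For `J = I^∨`, properness of the step at `w` is equivalent to
`J + t^w O~ ≠ J + t^(w + e_i) O~`. Dualizing with `(A + B)^∨ = A^∨ ∩ B^∨`,
`(t^u O~)^∨ = t^(γ - u) O~` and `I^∨∨ = I` turns this into
`I ∩ t^(γ - w) O~ ≠ I ∩ t^(γ - w - e_i) O~`, i.e. properness of the step of `I` at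
`γ - w - e_i`. The converse direction dualizes back, which needs `J + t^u O~` to be reflexive:
it is a fractional ideal because an `O`-stable module squeezed between two `t^a O~` is finitely
generated, `t^γ O~ ⊆ O` making `O~` finite over `O`.
-/

section

variable {p : ℕ} {O : Subalgebra ℂ (KK p)} {γ : Fin p → ℤ}

def ordVec (x : KK p) : Fin p → ℤ := fun j => (x j).order

def tpow (c : Fin p → ℤ) : KK p := fun j => HahnSeries.single (c j) 1

def unitMonomial (i : Fin p) (k : ℤ) : KK p := Pi.single i (HahnSeries.single k 1)

lemma mem_stdMod_iff_s9 {x : KK p} {c : Fin p → ℤ} :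
    x ∈ stdMod p c ↔ ∀ j, x j ≠ 0 → c j ≤ ordVec x j := by
  refine forall_congr' fun j => ⟨fun h hx => ?_, fun h k hk => ?_⟩
  · by_contra! hlt
    exact HahnSeries.coeff_order_eq_zero.not.mpr hx (h _ hlt)
  · by_cases hx : x j = 0
    · simp [hx]
    · exact HahnSeries.coeff_eq_zero_of_lt_order (hk.trans_le (h hx))

lemma mem_stdMod_ordVec (x : KK p) : x ∈ stdMod p (ordVec x) :=
  mem_stdMod_iff_s9.mpr fun _ _ => le_rfl

lemma stdMod_antitone : Antitone (stdMod p) :=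
  fun _ _ hcd _ hx j k hk => hx j k (hk.trans_le (hcd j))

lemma mul_mem_stdMod {a b : Fin p → ℤ} {x y : KK p} (hx : x ∈ stdMod p a)
    (hy : y ∈ stdMod p b) : x * y ∈ stdMod p (a + b) := by
  rw [mem_stdMod_iff_s9] at *
  intro j hxy
  have hx0 : x j ≠ 0 := left_ne_zero_of_mul hxy
  have hy0 : y j ≠ 0 := right_ne_zero_of_mul hxy
  simp only [ordVec, Pi.mul_apply, HahnSeries.order_mul hx0 hy0, Pi.add_apply]
  exact add_le_add (hx j hx0) (hy j hy0)

lemma mul_mem_stdMod_iff {x h : KK p} (hh : ∀ j, h j ≠ 0) {d : Fin p → ℤ} :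
    x * h ∈ stdMod p d ↔ x ∈ stdMod p (d - ordVec h) := by
  simp only [mem_stdMod_iff_s9]
  refine forall_congr' fun j => ?_
  by_cases hx : x j = 0
  · simp [hx]
  · simp only [ordVec, Pi.mul_apply, ne_eq, mul_eq_zero, hx, hh j, or_self, not_false_eq_true,
      HahnSeries.order_mul hx (hh j), Pi.sub_apply, forall_const]
    omega

lemma mul_inv_mul_of_forall_ne_zero {x h : KK p} (hh : ∀ j, h j ≠ 0) : x * h⁻¹ * h = x :=
  funext fun j => inv_mul_cancel_right₀ (hh j) (x j)

lemma tpow_ne_zero (c : Fin p → ℤ) (j : Fin p) : tpow c j ≠ 0 :=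
  HahnSeries.single_ne_zero one_ne_zero

lemma ordVec_tpow (c : Fin p → ℤ) : ordVec (tpow c) = c :=
  funext fun _ => HahnSeries.order_single one_ne_zero

lemma tpow_mem_stdMod (c : Fin p → ℤ) : tpow c ∈ stdMod p c := by
  simpa only [ordVec_tpow] using mem_stdMod_ordVec (tpow c)

lemma one_mem_stdMod_zero : (1 : KK p) ∈ stdMod p 0 :=
  tpow_mem_stdMod 0

lemma mem_stdMod_add_single_iff {x : KK p} {w : Fin p → ℤ} {i : Fin p} (hx : x ∈ stdMod p w) :
    x ∈ stdMod p (w + Pi.single i 1) ↔ (x i).coeff (w i) = 0 := by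
  refine ⟨fun h => h i (w i) (by simp), fun h j k hk => ?_⟩
  by_cases hji : j = i
  · subst hji
    simp only [Pi.add_apply, Pi.single_eq_same] at hk
    rcases (Int.lt_add_one_iff.mp hk).lt_or_eq with hlt | rfl
    exacts [hx j k hlt, h]
  · simp only [Pi.add_apply, Pi.single_eq_of_ne hji, add_zero] at hk
    exact hx j k hk

lemma stdMod_add_single_le (w : Fin p → ℤ) (i : Fin p) :
    stdMod p (w + Pi.single i 1) ≤ stdMod p w :=
  stdMod_antitone (le_add_of_nonneg_right (Pi.single_nonneg.mpr zero_le_one))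

lemma unitMonomial_mem_stdMod {a : Fin p → ℤ} {i : Fin p} {k : ℤ} (h : a i ≤ k) :
    unitMonomial i k ∈ stdMod p a := by
  refine mem_stdMod_iff_s9.mpr fun j hj => ?_
  by_cases hji : j = i
  · subst hji
    simpa [ordVec, unitMonomial, HahnSeries.order_single] using h
  · simp [unitMonomial, Pi.single_eq_of_ne hji] at hj

lemma unitMonomial_notMem_stdMod_add_single (w : Fin p → ℤ) (i : Fin p) :
    unitMonomial i (w i) ∉ stdMod p (w + Pi.single i 1) := by
  rw [mem_stdMod_add_single_iff (unitMonomial_mem_stdMod le_rfl)]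
  simp [unitMonomial]

lemma stdMod_le_span_singleton_sup {g : KK p} {w : Fin p → ℤ} {i : Fin p} (hg : g ∈ stdMod p w)
    (hg' : g ∉ stdMod p (w + Pi.single i 1)) :
    stdMod p w ≤ (ℂ ∙ g) ⊔ stdMod p (w + Pi.single i 1) := by
  rw [mem_stdMod_add_single_iff hg] at hg'
  intro x hx
  set c : ℂ := (x i).coeff (w i) / (g i).coeff (w i)
  have hrest : x - c • g ∈ stdMod p (w + Pi.single i 1) := by
    rw [mem_stdMod_add_single_iff (sub_mem hx (Submodule.smul_mem _ c hg))]
    simp [c, hg']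
  exact Submodule.mem_sup.mpr
    ⟨c • g, Submodule.smul_mem _ c (Submodule.mem_span_singleton_self g), _, hrest,
      add_sub_cancel _ _⟩

lemma sup_stdMod_eq_iff {M : Submodule ℂ (KK p)} {w : Fin p → ℤ} {i : Fin p} :
    M ⊔ stdMod p w = M ⊔ stdMod p (w + Pi.single i 1) ↔
      ¬ M ⊓ stdMod p w ≤ stdMod p (w + Pi.single i 1) := by
  constructor
  · intro heq hle
    have hmono : unitMonomial i (w i) ∈ M ⊔ stdMod p (w + Pi.single i 1) :=
      heq ▸ Submodule.mem_sup_right (unitMonomial_mem_stdMod le_rfl)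
    obtain ⟨g, hgM, y, hy, hgy⟩ := Submodule.mem_sup.mp hmono
    have hgw : g ∈ stdMod p w := by
      rw [eq_sub_of_add_eq hgy]
      exact sub_mem (unitMonomial_mem_stdMod le_rfl) (stdMod_add_single_le w i hy)
    exact unitMonomial_notMem_stdMod_add_single w i
      (hgy ▸ add_mem (hle ⟨hgM, hgw⟩) hy)
  · intro hle
    obtain ⟨g, ⟨hgM, hgw⟩, hg'⟩ := SetLike.not_le_iff_exists.mp hle
    refine le_antisymm (sup_le le_sup_left ?_)
      (sup_le_sup_left (stdMod_add_single_le w i) M)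
    exact (stdMod_le_span_singleton_sup hgw hg').trans
      (sup_le_sup_right ((Submodule.span_singleton_le_iff_mem g M).mpr hgM) _)

lemma inf_stdMod_eq_iff {M : Submodule ℂ (KK p)} {w : Fin p → ℤ} {i : Fin p} :
    M ⊓ stdMod p (w + Pi.single i 1) = M ⊓ stdMod p w ↔
      M ⊓ stdMod p w ≤ stdMod p (w + Pi.single i 1) :=
  ⟨fun h => h ▸ inf_le_right,
    fun h => le_antisymm (inf_le_inf_left M (stdMod_add_single_le w i)) (le_inf inf_le_left h)⟩

lemma valC_eq_coe_iff {g : LaurentSeries ℂ} {n : ℤ} : valC g = n ↔ g ≠ 0 ∧ g.order = n := by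
  unfold valC
  split_ifs with hg <;> simp [hg]

lemma mem_vals_iff {S : Set (KK p)} {v : Fin p → ℤ} :
    v ∈ vals S ↔ ∃ g ∈ S, (∀ j, g j ≠ 0) ∧ ordVec g = v := by
  simp only [vals, valC_eq_coe_iff, funext_iff, ordVec, forall_and]
  rfl

lemma exists_forall_ne_zero_of_stdMod_le {M : Submodule ℂ (KK p)} {c w : Fin p → ℤ}
    (hc : stdMod p c ≤ M) {g : KK p} (hgM : g ∈ M) (hgw : g ∈ stdMod p w) :
    ∃ g' ∈ M, g' ∈ stdMod p w ∧ (∀ j, g' j ≠ 0) ∧ ∀ j, g j ≠ 0 → g' j = g j := by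
  set f : KK p := fun j => if g j = 0 then tpow (c ⊔ w) j else 0
  have hf : f ∈ stdMod p (c ⊔ w) := by
    refine mem_stdMod_iff_s9.mpr fun j hj => ?_
    by_cases hgj : g j = 0
    · simp [f, hgj, ordVec, tpow, HahnSeries.order_single]
    · simp [f, hgj] at hj
  refine ⟨g + f, add_mem hgM (hc (stdMod_antitone le_sup_left hf)),
    add_mem hgw (stdMod_antitone le_sup_right hf), fun j => ?_, fun j hgj => by simp [f, hgj]⟩
  by_cases hgj : g j = 0
  · simpa [f, hgj] using tpow_ne_zero (c ⊔ w) j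
  · simp [f, hgj]

lemma lamSet_nonempty_iff {M : Submodule ℂ (KK p)} {c : Fin p → ℤ} (hc : stdMod p c ≤ M)
    (w : Fin p → ℤ) (i : Fin p) :
    (LamSet i w (vals (M : Set (KK p)))).Nonempty ↔
      ¬ M ⊓ stdMod p w ≤ stdMod p (w + Pi.single i 1) := by
  constructor
  · rintro ⟨_, hv, hαi, hwα⟩ hle
    obtain ⟨g, hgM, hne, rfl⟩ := mem_vals_iff.mp hv
    have hgw : g ∈ stdMod p w := mem_stdMod_iff_s9.mpr fun j _ => hwα j
    have hcoeff := (mem_stdMod_add_single_iff hgw).mp (hle ⟨hgM, hgw⟩)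
    rw [← hαi] at hcoeff
    exact HahnSeries.coeff_order_eq_zero.not.mpr (hne i) hcoeff
  · intro hle
    obtain ⟨g, ⟨hgM, hgw⟩, hg'⟩ := SetLike.not_le_iff_exists.mp hle
    rw [mem_stdMod_add_single_iff hgw] at hg'
    have hgi : g i ≠ 0 := HahnSeries.ne_zero_of_coeff_ne_zero hg'
    obtain ⟨f, hfM, hfw, hne, hfg⟩ := exists_forall_ne_zero_of_stdMod_le hc hgM hgw
    refine ⟨ordVec f, mem_vals_iff.mpr ⟨f, hfM, hne, rfl⟩, ?_,
      fun j => mem_stdMod_iff_s9.mp hfw j (hne j)⟩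
    rw [ordVec, hfg i hgi]
    exact le_antisymm (HahnSeries.order_le_of_coeff_ne_zero hg') (mem_stdMod_iff_s9.mp hgw i hgi)

lemma dualMod_anti {S T : Set (KK p)} (h : S ⊆ T) : dualMod O T ≤ dualMod O S :=
  fun _ hx g hg => hx g (h hg)

lemma dualMod_sup (A B : Submodule ℂ (KK p)) :
    dualMod O ↑(A ⊔ B) = dualMod O ↑A ⊓ dualMod O ↑B := by
  refine le_antisymm (le_inf (dualMod_anti (SetLike.coe_subset_coe.mpr le_sup_left))
    (dualMod_anti (SetLike.coe_subset_coe.mpr le_sup_right))) ?_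
  rintro x ⟨hA, hB⟩ g hg
  obtain ⟨a, ha, b, hb, rfl⟩ := Submodule.mem_sup.mp hg
  rw [mul_add]
  exact O.add_mem (hA a ha) (hB b hb)

lemma mem_of_mem_stdMod_conductor
    (hγ : dualMod O (stdMod p 0 : Set (KK p)) = stdMod p γ) {x : KK p}
    (hx : x ∈ stdMod p γ) : x ∈ O := by
  rw [← hγ] at hx
  simpa using hx 1 one_mem_stdMod_zero

lemma dualMod_stdMod (hγ : dualMod O (stdMod p 0 : Set (KK p)) = stdMod p γ)
    (c : Fin p → ℤ) : dualMod O ↑(stdMod p c) = stdMod p (γ - c) := by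
  ext x
  constructor
  · intro hx
    have hxc : x * tpow c ∈ stdMod p γ := by
      rw [← hγ]
      intro u hu
      rw [mul_assoc]
      exact hx _ (by simpa using mul_mem_stdMod (tpow_mem_stdMod c) hu)
    simpa [ordVec_tpow] using (mul_mem_stdMod_iff (tpow_ne_zero c)).mp hxc
  · intro hx g hg
    exact mem_of_mem_stdMod_conductor hγ (by simpa using mul_mem_stdMod hx hg)

lemma exists_mul_eq_of_mem_stdMod
    (hγ : dualMod O (stdMod p 0 : Set (KK p)) = stdMod p γ) {h x : KK p} (hh : ∀ j, h j ≠ 0)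
    (hx : x ∈ stdMod p (γ + ordVec h)) : ∃ a ∈ O, a * h = x := by
  refine ⟨x * h⁻¹, mem_of_mem_stdMod_conductor hγ ?_, mul_inv_mul_of_forall_ne_zero hh⟩
  rwa [← add_sub_cancel_right γ (ordVec h), ← mul_mem_stdMod_iff hh,
    mul_inv_mul_of_forall_ne_zero hh]

lemma dualMod_le_stdMod (hO : (O : Set (KK p)) ⊆ (stdMod p 0 : Set (KK p))) {S : Set (KK p)}
    {h : KK p} (hhS : h ∈ S) (hh : ∀ j, h j ≠ 0) : dualMod O S ≤ stdMod p (-ordVec h) :=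
  fun x hx => by simpa using (mul_mem_stdMod_iff hh).mp (hO (hx h hhS))

lemma IsFracIdeal.exists_le_stdMod (hO : (O : Set (KK p)) ⊆ (stdMod p 0 : Set (KK p)))
    {I : Submodule ℂ (KK p)} (hI : IsFracIdeal O I) : ∃ m, I ≤ stdMod p m := by
  obtain ⟨-, ⟨s, -, hspan⟩, -⟩ := hI
  obtain ⟨m, hm⟩ := (s.image ordVec).bddBelow
  refine ⟨m, fun x hx => ?_⟩
  obtain ⟨a, ha, rfl⟩ := hspan x hx
  refine Submodule.sum_mem _ fun g hg => ?_
  have hgm : g ∈ stdMod p m :=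
    stdMod_antitone (hm (Finset.mem_coe.mpr (Finset.mem_image_of_mem ordVec hg)))
      (mem_stdMod_ordVec g)
  simpa using mul_mem_stdMod (hO (ha g hg)) hgm

lemma IsFracIdeal.exists_stdMod_le
    (hγ : dualMod O (stdMod p 0 : Set (KK p)) = stdMod p γ)
    {I : Submodule ℂ (KK p)} (hI : IsFracIdeal O I) : ∃ c, stdMod p c ≤ I := by
  obtain ⟨hstab, -, h, hhI, hh⟩ := hI
  refine ⟨γ + ordVec h, fun x hx => ?_⟩
  obtain ⟨a, ha, rfl⟩ := exists_mul_eq_of_mem_stdMod hγ hh hx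
  exact hstab a ha h hhI

def unitMonomials (b c : Fin p → ℤ) : Finset (KK p) :=
  Finset.univ.biUnion fun j => (Finset.Ico (b j) (c j)).image (unitMonomial j)

lemma stdMod_le_span_sup_stdMod (b c : Fin p → ℤ) :
    stdMod p b ≤ Submodule.span ℂ ↑(unitMonomials b c) ⊔ stdMod p c := by
  intro x hx
  set y : KK p := ∑ j, ∑ k ∈ Finset.Ico (b j) (c j), (x j).coeff k • unitMonomial j k
  have hy : y ∈ Submodule.span ℂ ↑(unitMonomials b c) :=
    Submodule.sum_mem _ fun j _ => Submodule.sum_mem _ fun k hk =>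
      Submodule.smul_mem _ _ (Submodule.subset_span (by
        simp only [unitMonomials, Finset.coe_biUnion, Finset.coe_image]
        exact Set.mem_iUnion₂.mpr ⟨j, Finset.mem_coe.mpr (Finset.mem_univ j), k, hk, rfl⟩))
  have hyj : ∀ j m, (y j).coeff m = if m ∈ Finset.Ico (b j) (c j) then (x j).coeff m else 0 := by
    intro j m
    simp [y, unitMonomial, Finset.sum_apply, Pi.single_apply, HahnSeries.coeff_single]
  have hr : x - y ∈ stdMod p c := by
    intro j m hm
    simp only [Pi.sub_apply, HahnSeries.coeff_sub, hyj]
    split_ifs with hmem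
    · exact sub_self _
    · rw [hx j m (by simp only [Finset.mem_Ico, not_and, not_lt] at hmem; omega), sub_zero]
  exact Submodule.mem_sup.mpr ⟨y, hy, x - y, hr, add_sub_cancel _ _⟩

-- `LinearMap.mulRight ℂ` would need `IsScalarTower ℂ (KK p) (KK p)`, which instance search does
-- not find for this `ℂ`-action.
def mulRightₗ (g : KK p) : KK p →ₗ[ℂ] KK p where
  toFun a := a * g
  map_add' a b := add_mul a b g
  map_smul' c a := by
    simp only [RingHom.id_apply, smul_eq_algebraMap_mul, mul_assoc]

def oSpan (O : Subalgebra ℂ (KK p)) (s : Finset (KK p)) : Submodule ℂ (KK p) :=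
  ⨆ g ∈ s, (algSubmodule O).map (mulRightₗ g)

lemma mul_mem_oSpan {s : Finset (KK p)} {g a : KK p} (hg : g ∈ s) (ha : a ∈ O) :
    a * g ∈ oSpan O s :=
  le_iSup₂ (f := fun g (_ : g ∈ s) => (algSubmodule O).map (mulRightₗ g)) g hg
    (Submodule.mem_map_of_mem (f := mulRightₗ g) ha)

lemma span_le_oSpan (s : Finset (KK p)) : Submodule.span ℂ ↑s ≤ oSpan O s :=
  Submodule.span_le.mpr fun g hg => by simpa using mul_mem_oSpan hg O.one_mem

lemma exists_sum_eq_of_mem_oSpan {s : Finset (KK p)} {x : KK p} (hx : x ∈ oSpan O s) :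
    ∃ a : KK p → KK p, (∀ g ∈ s, a g ∈ O) ∧ x = ∑ g ∈ s, a g * g := by
  obtain ⟨μ, hμ⟩ := (Submodule.mem_iSup_finset_iff_exists_sum _ _).mp hx
  choose a ha hμa using fun g => Submodule.mem_map.mp (μ g).2
  exact ⟨a, fun g _ => ha g, hμ.symm.trans (Finset.sum_congr rfl fun g _ => (hμa g).symm)⟩

/-- Generators: `t^a`, which gives `t^(γ + a) O~ = O · t^a`, and a `ℂ`-spanning set of the
finite-dimensional part of `M` in degrees `[b, γ + a)`. -/
lemma exists_finset_le_oSpan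
    (hγ : dualMod O (stdMod p 0 : Set (KK p)) = stdMod p γ) {M : Submodule ℂ (KK p)}
    (hstab : ∀ a ∈ O, ∀ x ∈ M, a * x ∈ M) {a b : Fin p → ℤ} (ha : stdMod p a ≤ M)
    (hb : M ≤ stdMod p b) : ∃ s : Finset (KK p), ↑s ⊆ (M : Set (KK p)) ∧ M ≤ oSpan O s := by
  set T := Submodule.span ℂ (unitMonomials b (γ + a) : Set (KK p))
  have hN : ∀ x ∈ stdMod p (γ + a), ∃ c ∈ O, c * tpow a = x := fun x hx =>
    exists_mul_eq_of_mem_stdMod hγ (tpow_ne_zero a) (by rwa [ordVec_tpow])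
  have hNM : stdMod p (γ + a) ≤ M := fun x hx => by
    obtain ⟨c, hc, rfl⟩ := hN x hx
    exact hstab c hc _ (ha (tpow_mem_stdMod a))
  have : FiniteDimensional ℂ ↥(M ⊓ T) := Submodule.finiteDimensional_of_le inf_le_right
  obtain ⟨S, hS⟩ := (Submodule.fg_iff_finiteDimensional (M ⊓ T)).mpr this
  refine ⟨insert (tpow a) S, ?_, ?_⟩
  · rw [Finset.coe_insert, Set.insert_subset_iff]
    exact ⟨ha (tpow_mem_stdMod a), fun g hg => (hS ▸ Submodule.subset_span hg : g ∈ M ⊓ T).1⟩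
  calc M ≤ M ⊓ (stdMod p (γ + a) ⊔ T) :=
        le_inf le_rfl (sup_comm T _ ▸ hb.trans (stdMod_le_span_sup_stdMod b (γ + a)))
    _ = stdMod p (γ + a) ⊔ M ⊓ T := by rw [inf_comm, sup_inf_assoc_of_le _ hNM, inf_comm]
    _ ≤ oSpan O (insert (tpow a) S) := by
      refine sup_le (fun x hx => ?_) ?_
      · obtain ⟨c, hc, rfl⟩ := hN x hx
        exact mul_mem_oSpan (Finset.mem_insert_self _ _) hc
      · rw [← hS]
        exact (Submodule.span_mono (Finset.coe_subset.mpr (Finset.subset_insert _ _))).trans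
          (span_le_oSpan _)

lemma isFracIdeal_of_stdMod_le_of_le_stdMod
    (hγ : dualMod O (stdMod p 0 : Set (KK p)) = stdMod p γ) {M : Submodule ℂ (KK p)}
    (hstab : ∀ a ∈ O, ∀ x ∈ M, a * x ∈ M) {a b : Fin p → ℤ} (ha : stdMod p a ≤ M)
    (hb : M ≤ stdMod p b) : IsFracIdeal O M := by
  obtain ⟨s, hsM, hs⟩ := exists_finset_le_oSpan hγ hstab ha hb
  exact ⟨hstab, ⟨s, hsM, fun x hx => exists_sum_eq_of_mem_oSpan (hs hx)⟩,
    tpow a, ha (tpow_mem_stdMod a), tpow_ne_zero a⟩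

lemma isFracIdeal_dualMod_sup_stdMod
    (hγ : dualMod O (stdMod p 0 : Set (KK p)) = stdMod p γ)
    (hO : (O : Set (KK p)) ⊆ (stdMod p 0 : Set (KK p))) {I : Submodule ℂ (KK p)}
    (hI : IsFracIdeal O I) (u : Fin p → ℤ) :
    IsFracIdeal O (dualMod O ↑I ⊔ stdMod p u) := by
  obtain ⟨h, hhI, hh⟩ := hI.2.2
  refine isFracIdeal_of_stdMod_le_of_le_stdMod hγ ?_ le_sup_right
    (sup_le ((dualMod_le_stdMod hO hhI hh).trans (stdMod_antitone inf_le_left))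
      (stdMod_antitone inf_le_right))
  intro a ha x hx
  obtain ⟨y, hy, z, hz, rfl⟩ := Submodule.mem_sup.mp hx
  rw [mul_add]
  refine add_mem (Submodule.mem_sup_left fun g hg => ?_)
    (Submodule.mem_sup_right (by simpa using mul_mem_stdMod (hO ha) hz))
  rw [mul_assoc]
  exact O.mul_mem ha (hy g hg)

end

theorem lambda_duality_general {p : ℕ} (O : Subalgebra ℂ (KK p))
    (hO : (O : Set (KK p)) ⊆ (stdMod p 0 : Set (KK p)))
    (γ : Fin p → ℕ)
    (hγ : dualMod O (stdMod p 0 : Set (KK p)) = stdMod p (fun i => (γ i : ℤ)))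
    (hG1 : ∀ I : Submodule ℂ (KK p), IsFracIdeal O I →
      dualMod O ((dualMod O (I : Set (KK p)) : Submodule ℂ (KK p)) : Set (KK p)) = I)
    (I : Submodule ℂ (KK p)) (hI : IsFracIdeal O I) (w : Fin p → ℤ) (i : Fin p) :
    (LamSet i w
      (vals ((dualMod O (I : Set (KK p)) : Submodule ℂ (KK p)) : Set (KK p)))).Nonempty ↔
      LamSet i ((fun k => (γ k : ℤ) - w k) - Pi.single i 1)
        (vals (I : Set (KK p))) = ∅ := by
  set J := dualMod O (I : Set (KK p))
  set v := (fun k => (γ k : ℤ) - w k) - Pi.single i 1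
  obtain ⟨m, hIm⟩ := hI.exists_le_stdMod hO
  obtain ⟨c, hcI⟩ := hI.exists_stdMod_le hγ
  have hcJ : stdMod p ((fun k => (γ k : ℤ)) - m) ≤ J :=
    dualMod_stdMod hγ m ▸ dualMod_anti (SetLike.coe_subset_coe.mpr hIm)
  have hdual : ∀ u, dualMod O ↑(J ⊔ stdMod p u) = I ⊓ stdMod p ((fun k => (γ k : ℤ)) - u) :=
    fun u => by rw [dualMod_sup, hG1 I hI, dualMod_stdMod hγ]
  have hrefl : ∀ u, dualMod O ↑(dualMod O ↑(J ⊔ stdMod p u)) = J ⊔ stdMod p u :=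
    fun u => hG1 _ (isFracIdeal_dualMod_sup_stdMod hγ hO hI u)
  have hsup : J ⊔ stdMod p w = J ⊔ stdMod p (w + Pi.single i 1) ↔
      I ⊓ stdMod p (v + Pi.single i 1) = I ⊓ stdMod p v := by
    rw [show v + Pi.single i 1 = (fun k => (γ k : ℤ)) - w from sub_add_cancel _ _,
      show v = (fun k => (γ k : ℤ)) - (w + Pi.single i 1) from (sub_sub _ _ _), ← hdual, ← hdual]
    exact ⟨fun h => by rw [h], fun h => by rw [← hrefl w, h, hrefl]⟩
  rw [lamSet_nonempty_iff hcJ, ← sup_stdMod_eq_iff, hsup, inf_stdMod_eq_iff,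
    ← not_not (a := I ⊓ _ ≤ _), ← lamSet_nonempty_iff hcI, Set.not_nonempty_iff_eq_empty]

/-- **Λ-duality**: `Λ_i(w, val(I^∨)) ≠ ∅` iff `Λ_i(γ − w − e_i, val I) = ∅`. -/
theorem lambda_duality {p : ℕ} (hp : 1 ≤ p) (O : Subalgebra ℂ (KK p))
    (hO : (O : Set (KK p)) ⊆ (stdMod p 0 : Set (KK p)))
    (γ : Fin p → ℕ)
    (hγ : dualMod O (stdMod p 0 : Set (KK p)) = stdMod p (fun i => (γ i : ℤ)))
    (hG1 : ∀ I : Submodule ℂ (KK p), IsFracIdeal O I →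
      dualMod O ((dualMod O (I : Set (KK p)) : Submodule ℂ (KK p)) : Set (KK p)) = I)
    (hG2 : ∀ I J : Submodule ℂ (KK p), IsFracIdeal O I → IsFracIdeal O J → I ≤ J →
      qdim I J = qdim (dualMod O (J : Set (KK p))) (dualMod O (I : Set (KK p))))
    (hG3 : DeltaSet (fun i => (γ i : ℤ) - 1) (vals (O : Set (KK p))) = ∅)
    (I : Submodule ℂ (KK p)) (hI : IsFracIdeal O I) (w : Fin p → ℤ) (i : Fin p) :
    (LamSet i w
      (vals ((dualMod O (I : Set (KK p)) : Submodule ℂ (KK p)) : Set (KK p)))).Nonempty ↔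
      LamSet i ((fun k => (γ k : ℤ) - w k) - Pi.single i 1)
        (vals (I : Set (KK p))) = ∅ :=
  lambda_duality_general O hO γ hγ hG1 I hI w i
end
end
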